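/- With the notation of the regularized logarithmic potential: for ξ ≤ 0 and all s ≥ 0, |G_{1,ξ}(s) − G_{1,−∞}(s)| ≤ K·e^{ξ/4}·√s for a constant K depending only on C, where G_{1,−∞}(s) = −s ln(s/C²) − 2s. -/
import Mathlib


/-- Truncated logarithm: `ln_{+,ξ}(s) = max(ln s, ξ)` for `s > 0`, `ln_{+,ξ}(0) = ξ`. -/
noncomputable def lnPlus (ξ s : ℝ) : ℝ := if s = 0 then ξ else max (Real.log s) ξ

/-- Regularized logarithmic potential
`G_{1,ξ}(s) = −s (ln_{+,ξ}(s/C²) + 2 + C² e^{ξ − ln_{+,ξ}(s)})`. -/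
noncomputable def G1xi (C ξ s : ℝ) : ℝ :=
  -s * (lnPlus ξ (s / C ^ 2) + 2 + C ^ 2 * Real.exp (ξ - lnPlus ξ s))

/-- Estimate (g11p): there is a constant `K` (depending only on `C`) such that for all
`ξ ≤ 0` and `s ≥ 0`, `|G_{1,ξ}(s) − G_{1,−∞}(s)| ≤ K e^{ξ/4} √s`, where
`G_{1,−∞}(s) = −s ln(s/C²) − 2s` is the un-regularized logarithmic potential. -/
theorem stmt_12 (C : ℝ) (hC : 0 < C) :
    ∃ K : ℝ, ∀ ξ : ℝ, ξ ≤ 0 → ∀ s : ℝ, 0 ≤ s →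
      |G1xi C ξ s - (-s * Real.log (s / C ^ 2) - 2 * s)| ≤
        K * Real.exp (ξ / 4) * Real.sqrt s := by
  refine ⟨C ^ 2 + 4 * C, fun ξ hξ s hs => ?_⟩
  rcases eq_or_lt_of_le hs with h0 | hs'
  · simp [G1xi, lnPlus, ← h0]
  · have hC2 : (0:ℝ) < C ^ 2 := by positivity
    have hsC : 0 < s / C ^ 2 := by positivity
    have h1 : lnPlus ξ s = max (Real.log s) ξ := by simp [lnPlus, hs'.ne']
    have h2 : lnPlus ξ (s / C ^ 2) = max (Real.log (s / C ^ 2)) ξ := by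
      simp [lnPlus, hsC.ne']
    set L := Real.log (s / C ^ 2) with hL
    set A := max L ξ - L with hA
    set B := s * (C ^ 2 * Real.exp (ξ - max (Real.log s) ξ)) with hB
    have hA0 : 0 ≤ A := by simp [hA]
    have hB0 : 0 ≤ B := by positivity
    have hdiff : G1xi C ξ s - (-s * L - 2 * s) = -(s * A + B) := by
      simp only [G1xi, h1, h2, hA, hB]; ring
    rw [hdiff, abs_neg, abs_of_nonneg (by positivity)]
    have hsq : Real.sqrt s ^ 2 = s := Real.sq_sqrt hs
    have hsqpos : 0 < Real.sqrt s := Real.sqrt_pos.mpr hs'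
    -- Bound B
    have hBs : B ≤ C ^ 2 * Real.exp (ξ / 4) * Real.sqrt s := by
      have e1 : B ≤ C ^ 2 * Real.exp ξ := by
        have hm : Real.log s ≤ max (Real.log s) ξ := le_max_left _ _
        have h3 : Real.exp (ξ - max (Real.log s) ξ) ≤ Real.exp ξ / s :=
          calc Real.exp (ξ - max (Real.log s) ξ) ≤ Real.exp (ξ - Real.log s) :=
                Real.exp_le_exp.mpr (by linarith)
            _ = Real.exp ξ / s := by rw [Real.exp_sub, Real.exp_log hs']
        calc B ≤ s * (C ^ 2 * (Real.exp ξ / s)) := by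
              rw [hB]; gcongr
          _ = C ^ 2 * Real.exp ξ := by field_simp
      have e2 : B ≤ C ^ 2 * s := by
        have : Real.exp (ξ - max (Real.log s) ξ) ≤ 1 := by
          rw [Real.exp_le_one_iff]
          have := le_max_right (Real.log s) ξ
          linarith
        calc B ≤ s * (C ^ 2 * 1) := by rw [hB]; gcongr
          _ = C ^ 2 * s := by ring
      have key : B ≤ C ^ 2 * Real.exp (ξ / 2) * Real.sqrt s := by
        have hsq2 : (C ^ 2 * Real.exp (ξ / 2) * Real.sqrt s) ^ 2
            = (C ^ 2 * Real.exp ξ) * (C ^ 2 * s) := by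
          have he : Real.exp (ξ / 2) ^ 2 = Real.exp ξ := by
            rw [sq, ← Real.exp_add, add_halves]
          rw [mul_pow, mul_pow, he, hsq]; ring
        have hBB : B ^ 2 ≤ (C ^ 2 * Real.exp (ξ / 2) * Real.sqrt s) ^ 2 := by
          rw [hsq2, sq]
          exact mul_le_mul e1 e2 hB0 (by positivity)
        have h4 := Real.sqrt_le_sqrt hBB
        rwa [Real.sqrt_sq hB0, Real.sqrt_sq (by positivity)] at h4
      have : Real.exp (ξ / 2) ≤ Real.exp (ξ / 4) := by
        apply Real.exp_le_exp.mpr; linarith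
      calc B ≤ C ^ 2 * Real.exp (ξ / 2) * Real.sqrt s := key
        _ ≤ C ^ 2 * Real.exp (ξ / 4) * Real.sqrt s := by gcongr
    -- Bound s * A
    have hAs : s * A ≤ 4 * C * Real.exp (ξ / 4) * Real.sqrt s := by
      rcases le_or_gt ξ L with h | h
      · have : A = 0 := by rw [hA, max_eq_left h]; ring
        rw [this, mul_zero]; positivity
      · have hAval : A = ξ - L := by rw [hA, max_eq_right h.le]
        have hLneg : L < 0 := lt_of_lt_of_le h hξ
        have hsval : s = C ^ 2 * Real.exp L := by
          rw [hL]
          rw [Real.exp_log hsC]; field_simp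
        have hsqrt : Real.sqrt s = C * Real.exp (L / 2) := by
          rw [hsval]
          rw [show C ^ 2 * Real.exp L = (C * Real.exp (L / 2)) ^ 2 by
            rw [mul_pow, sq (Real.exp (L / 2)), ← Real.exp_add, add_halves]]
          exact Real.sqrt_sq (by positivity)
        -- key: (-L) * exp (L/4) ≤ 4
        have hkey : (-L) * Real.exp (L / 4) ≤ 4 := by
          have h1 : -L / 4 + 1 ≤ Real.exp (-L / 4) := Real.add_one_le_exp _
          have h2 : Real.exp (L / 4) * Real.exp (-L / 4) = 1 := by
            have : L / 4 + -L / 4 = 0 := by ring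
            rw [← Real.exp_add, this, Real.exp_zero]
          nlinarith [Real.exp_pos (L / 4), Real.exp_pos (-L / 4)]
        have hle : Real.exp (L / 4) ≤ Real.exp (ξ / 4) := by
          apply Real.exp_le_exp.mpr; linarith
        have step : s * A ≤ C ^ 2 * Real.exp L * (-L) := by
          rw [hAval, hsval]
          have : ξ - L ≤ -L := by linarith
          have hpos : (0:ℝ) ≤ C ^ 2 * Real.exp L := by positivity
          nlinarith [Real.exp_pos L]
        have expsplit : Real.exp L = Real.exp (L / 2) * Real.exp (L / 4) * Real.exp (L / 4) := by
          rw [← Real.exp_add, ← Real.exp_add]; congr 1; ring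
        calc s * A ≤ C ^ 2 * Real.exp L * (-L) := step
          _ = C ^ 2 * Real.exp (L / 2) * Real.exp (L / 4) * ((-L) * Real.exp (L / 4)) := by
              rw [expsplit]; ring
          _ ≤ C ^ 2 * Real.exp (L / 2) * Real.exp (ξ / 4) * 4 := by
              have h0 : (0:ℝ) ≤ C ^ 2 * Real.exp (L / 2) := by positivity
              have hL4 : (0:ℝ) ≤ (-L) * Real.exp (L / 4) := by
                apply mul_nonneg (by linarith) (Real.exp_pos _).le
              nlinarith [Real.exp_pos (L / 4), Real.exp_pos (ξ / 4),
                mul_le_mul hle hkey hL4 (Real.exp_pos (ξ/4)).le]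
          _ = 4 * C * Real.exp (ξ / 4) * (C * Real.exp (L / 2)) := by ring
          _ = 4 * C * Real.exp (ξ / 4) * Real.sqrt s := by rw [hsqrt]
    calc s * A + B ≤ 4 * C * Real.exp (ξ / 4) * Real.sqrt s
          + C ^ 2 * Real.exp (ξ / 4) * Real.sqrt s := add_le_add hAs hBs
      _ = (C ^ 2 + 4 * C) * Real.exp (ξ / 4) * Real.sqrt s := by ring
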